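/- For every integer m ≥ 1 and every complex number g with |g| < 1/4, the recursively defined functions satisfy the closed form X_m(g) = 2g·[(1+z)^m − (1−z)^m] / [(1+z)^{m+1} − (1−z)^{m+1}], where z = √(1−4g) is the principal square root; in particular the denominator (1+z)^{m+1} − (1−z)^{m+1} is nonzero for |g| < 1/4. -/

import Mathlib

open scoped Real BigOperators

/-- The generating functions `X_m` of rooted planar trees of height at most `m`:
`X_0 = 0`, `X_1(g) = g`, `X_m(g) = g/(1 - X_{m-1}(g))`. -/
noncomputable def Xc : ℕ → ℂ → ℂ
  | 0, _ => 0
  | (m + 1), g => g / (1 - Xc m g)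

/-!
Put `a = 1 + z` and `b = 1 - z`, so that `a + b = 2` and `a * b = 1 - z ^ 2 = 4 * g`. Then
`D k = a ^ k - b ^ k` satisfies `D (k + 2) = 2 * D (k + 1) - 4 * g * D k`, which is exactly what
makes `2 * g * D k / D (k + 1)` obey the recursion `X ↦ g / (1 - X)`. The denominators never
vanish: for `‖g‖ < 1/4` the principal root `z` has positive real part, hence `‖b‖ < ‖a‖`.
-/

namespace Complex

lemma norm_one_sub_lt_norm_one_add {z : ℂ} (hz : 0 < z.re) : ‖1 - z‖ < ‖1 + z‖ := by
  rw [← sq_lt_sq₀ (norm_nonneg _) (norm_nonneg _), Complex.sq_norm, Complex.sq_norm,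
    normSq_apply, normSq_apply]
  simp only [sub_re, add_re, one_re, sub_im, add_im, one_im]
  nlinarith

lemma one_add_pow_sub_one_sub_pow_ne_zero {z : ℂ} (hz : 0 < z.re) {n : ℕ} (hn : n ≠ 0) :
    (1 + z) ^ n - (1 - z) ^ n ≠ 0 := by
  rw [sub_ne_zero]
  refine fun h => (pow_lt_pow_left₀ (norm_one_sub_lt_norm_one_add hz) (norm_nonneg _) hn).ne ?_
  rw [← norm_pow, ← norm_pow, h]

lemma re_cpow_half_pos {w : ℂ} (hw : 0 < w.re) : 0 < (w ^ (1 / 2 : ℂ)).re := by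
  rw [one_div, cpow_inv_two_re]
  exact Real.sqrt_pos.2 (by linarith [re_le_norm w])

lemma cpow_half_sq (w : ℂ) : (w ^ (1 / 2 : ℂ)) ^ 2 = w := by
  rw [one_div]
  exact_mod_cast cpow_nat_inv_pow w two_ne_zero

end Complex

theorem Xc_eq_div_of_add_eq_two_of_mul_eq {g a b : ℂ} (hab : a + b = 2) (hg : a * b = 4 * g)
    (hD : ∀ k, a ^ (k + 1) - b ^ (k + 1) ≠ 0) (k : ℕ) :
    Xc k g = 2 * g * (a ^ k - b ^ k) / (a ^ (k + 1) - b ^ (k + 1)) := by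
  induction k with
  | zero => simp [Xc]
  | succ k ih =>
    have hrec : a ^ (k + 2) - b ^ (k + 2) =
        2 * (a ^ (k + 1) - b ^ (k + 1)) - 4 * g * (a ^ k - b ^ k) := by
      rw [← hab, ← hg]; ring
    have hk := hD k
    have hk1 := hD (k + 1)
    have hden : 1 - 2 * g * (a ^ k - b ^ k) / (a ^ (k + 1) - b ^ (k + 1)) =
        (a ^ (k + 2) - b ^ (k + 2)) / (2 * (a ^ (k + 1) - b ^ (k + 1))) := by
      field_simp
      linear_combination -hrec
    rw [Xc, ih, hden]
    field_simp

theorem Xc_closed_form (m : ℕ) (g : ℂ) (hg : ‖g‖ < 1 / 4)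
    (z : ℂ) (hz : z = (1 - 4 * g) ^ ((1 : ℂ) / 2)) :
    (1 + z) ^ (m + 1) - (1 - z) ^ (m + 1) ≠ 0 ∧
      Xc m g = 2 * g * ((1 + z) ^ m - (1 - z) ^ m) /
        ((1 + z) ^ (m + 1) - (1 - z) ^ (m + 1)) := by
  have hre : 0 < (1 - 4 * g).re := by
    have hre_eq : (1 - 4 * g).re = 1 - 4 * g.re := by simp
    linarith [Complex.re_le_norm g]
  have hz_re : 0 < z.re := hz ▸ Complex.re_cpow_half_pos hre
  have hz_sq : z ^ 2 = 1 - 4 * g := hz ▸ Complex.cpow_half_sq (1 - 4 * g)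
  have hD k := Complex.one_add_pow_sub_one_sub_pow_ne_zero hz_re (Nat.succ_ne_zero k)
  refine ⟨hD m, Xc_eq_div_of_add_eq_two_of_mul_eq (by ring) ?_ hD m⟩
  linear_combination -hz_sq
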